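/- In a cartesian bicategory of relations, the dagger operation is a contravariant monoidal 2-functor: (i) (id_X)† = id_X; (ii) for R : X ⟶ Y and S : Y ⟶ Z, (R ; S)† = S† ; R†; (iii) for R : X ⟶ Y and S : X' ⟶ Y', (R ⊗ S)† = R† ⊗ S†; (iv) if R ≤ S for R, S : X ⟶ Y, then R† ≤ S†. -/

import Mathlib

open CategoryTheory MonoidalCategory

universe v u

/-- A cartesian bicategory of relations: a poset-enriched symmetric monoidal category
in which every object carries a cocommutative comonoid `(dup, del)` and a commutative
monoid `(mrg, bng)`, compatible with the monoidal structure, satisfying the adjunction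
inequalities and the Frobenius law, and such that every morphism is a lax comonoid
homomorphism. -/
class CartesianBicatRel (C : Type u) [Category.{v} C] [MonoidalCategory C]
    [SymmetricCategory C] [∀ X Y : C, PartialOrder (X ⟶ Y)] where
  comp_mono : ∀ {X Y Z : C} {f f' : X ⟶ Y} {g g' : Y ⟶ Z},
    f ≤ f' → g ≤ g' → f ≫ g ≤ f' ≫ g'
  tensor_mono : ∀ {X X' Y Y' : C} {f f' : X ⟶ X'} {g g' : Y ⟶ Y'},
    f ≤ f' → g ≤ g' → (f ⊗ₘ g) ≤ (f' ⊗ₘ g')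
  /-- comultiplication Δ -/
  dup : ∀ X : C, X ⟶ X ⊗ X
  /-- counit ! -/
  del : ∀ X : C, X ⟶ 𝟙_ C
  /-- multiplication ∇ -/
  mrg : ∀ X : C, X ⊗ X ⟶ X
  /-- unit ? -/
  bng : ∀ X : C, 𝟙_ C ⟶ X
  dup_coassoc : ∀ X : C, dup X ≫ (dup X ▷ X) ≫ (α_ X X X).hom = dup X ≫ (X ◁ dup X)
  dup_del_left : ∀ X : C, dup X ≫ (del X ▷ X) = (λ_ X).inv
  dup_del_right : ∀ X : C, dup X ≫ (X ◁ del X) = (ρ_ X).inv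
  dup_cocomm : ∀ X : C, dup X ≫ (β_ X X).hom = dup X
  mrg_assoc : ∀ X : C, (mrg X ▷ X) ≫ mrg X = (α_ X X X).hom ≫ (X ◁ mrg X) ≫ mrg X
  mrg_bng_left : ∀ X : C, (bng X ▷ X) ≫ mrg X = (λ_ X).hom
  mrg_bng_right : ∀ X : C, (X ◁ bng X) ≫ mrg X = (ρ_ X).hom
  mrg_comm : ∀ X : C, (β_ X X).hom ≫ mrg X = mrg X
  dup_tensor : ∀ X Y : C, dup (X ⊗ Y) = (dup X ⊗ₘ dup Y) ≫ tensorμ X X Y Y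
  del_tensor : ∀ X Y : C, del (X ⊗ Y) = (del X ⊗ₘ del Y) ≫ (λ_ (𝟙_ C)).hom
  dup_unitObj : dup (𝟙_ C) = (λ_ (𝟙_ C)).inv
  del_unitObj : del (𝟙_ C) = 𝟙 (𝟙_ C)
  mrg_tensor : ∀ X Y : C, mrg (X ⊗ Y) = tensorμ X Y X Y ≫ (mrg X ⊗ₘ mrg Y)
  bng_tensor : ∀ X Y : C, bng (X ⊗ Y) = (λ_ (𝟙_ C)).inv ≫ (bng X ⊗ₘ bng Y)
  mrg_unitObj : mrg (𝟙_ C) = (λ_ (𝟙_ C)).hom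
  bng_unitObj : bng (𝟙_ C) = 𝟙 (𝟙_ C)
  adj_dup_unit : ∀ X : C, 𝟙 X ≤ dup X ≫ mrg X
  adj_dup_counit : ∀ X : C, mrg X ≫ dup X ≤ 𝟙 (X ⊗ X)
  adj_del_counit : ∀ X : C, bng X ≫ del X ≤ 𝟙 (𝟙_ C)
  adj_del_unit : ∀ X : C, 𝟙 X ≤ del X ≫ bng X
  frob_left : ∀ X : C, (dup X ▷ X) ≫ (α_ X X X).hom ≫ (X ◁ mrg X) = mrg X ≫ dup X
  frob_right : ∀ X : C, (X ◁ dup X) ≫ (α_ X X X).inv ≫ (mrg X ▷ X) = mrg X ≫ dup X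
  lax_dup : ∀ {X Y : C} (R : X ⟶ Y), R ≫ dup Y ≤ dup X ≫ (R ⊗ₘ R)
  lax_del : ∀ {X Y : C} (R : X ⟶ Y), R ≫ del Y ≤ del X

namespace CartesianBicatRel

variable {C : Type u} [Category.{v} C] [MonoidalCategory C] [SymmetricCategory C]
  [∀ X Y : C, PartialOrder (X ⟶ Y)] [CartesianBicatRel C]

/-- The dagger `R† : Y ⟶ X` of `R : X ⟶ Y`, built from the cup `η_X = ?;Δ` and
the cap `ε_Y = ∇;!`. -/
def dagger {X Y : C} (R : X ⟶ Y) : Y ⟶ X :=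
  (λ_ Y).inv ≫ ((bng X ≫ dup X) ▷ Y) ≫ (α_ X X Y).hom ≫
    (X ◁ (R ▷ Y)) ≫ (X ◁ (mrg Y ≫ del Y)) ≫ (ρ_ X).hom

/-- `R` is single-valued. -/
def SingleValued {X Y : C} (R : X ⟶ Y) : Prop := dup X ≫ (R ⊗ₘ R) ≤ R ≫ dup Y

/-- `R` is total. -/
def Total {X Y : C} (R : X ⟶ Y) : Prop := del X ≤ R ≫ del Y

/-- `R` is injective. -/
def Injective {X Y : C} (R : X ⟶ Y) : Prop := (R ⊗ₘ R) ≫ mrg Y ≤ mrg X ≫ R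

/-- `R` is surjective. -/
def Surjective {X Y : C} (R : X ⟶ Y) : Prop := bng Y ≤ bng X ≫ R

/-- A map is a single-valued and total morphism. -/
def IsMap {X Y : C} (R : X ⟶ Y) : Prop := SingleValued R ∧ Total R

/-- A comap is an injective and surjective morphism. -/
def IsComap {X Y : C} (R : X ⟶ Y) : Prop := Injective R ∧ Surjective R

end CartesianBicatRel

/-!
The Frobenius law together with the unit and counit laws are exactly the snake
equations for the cup `?;Δ` and the cap `∇;!`, so every object is its own dual and `R†` is the
adjoint mate of `R`. Mates preserve identities and reverse composition in any rigid category;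
they preserve `⊗` because the cup of `X ⊗ X'` is the tensor of the cups up to the middle-four
interchange `tensorμ`; and `R ↦ R†` is monotone since it only whiskers and composes `R`.
-/

theorem CategoryTheory.eq_leftAdjointMate_of_coevaluation_comp {C : Type u} [Category.{v} C]
    [MonoidalCategory C] {X Y : C} [HasLeftDual X] [HasLeftDual Y] {f : X ⟶ Y} {g : (ᘁY : C) ⟶ ᘁX}
    (h : η_ (ᘁY) Y ≫ g ▷ Y = η_ (ᘁX) X ≫ (ᘁX) ◁ f) : g = (ᘁf) := by
  have := congrArg (tensorRightHomEquiv _ (ᘁY) Y _).symm h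
  rw [tensorRightHomEquiv_symm_coevaluation_comp_whiskerRight,
    tensorRightHomEquiv_symm_coevaluation_comp_whiskerLeft] at this
  exact (cancel_epi _).mp this

namespace CartesianBicatRel

variable {C : Type u} [Category.{v} C] [MonoidalCategory C] [SymmetricCategory C]
  [∀ X Y : C, PartialOrder (X ⟶ Y)] [CartesianBicatRel C]

abbrev selfPairing (X : C) : ExactPairing X X where
  coevaluation' := bng X ≫ dup X
  evaluation' := mrg X ≫ del X
  coevaluation_evaluation' := by
    rw [MonoidalCategory.whiskerLeft_comp, comp_whiskerRight]
    slice_lhs 2 4 => rw [frob_right]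
    slice_lhs 1 2 => rw [mrg_bng_right]
    slice_lhs 2 3 => rw [dup_del_left]
  evaluation_coevaluation' := by
    rw [comp_whiskerRight, MonoidalCategory.whiskerLeft_comp]
    slice_lhs 2 4 => rw [frob_left]
    slice_lhs 1 2 => rw [mrg_bng_left]
    slice_lhs 2 3 => rw [dup_del_right]

instance : LeftRigidCategory C where
  leftDual X := { leftDual := X, exact := selfPairing X }

theorem dagger_eq_leftAdjointMate {X Y : C} (R : X ⟶ Y) : dagger R = ᘁR := by
  dsimp only [dagger, leftAdjointMate]
  rw [show η_ (ᘁX : C) X = bng X ≫ dup X from rfl, show ε_ (ᘁY : C) Y = mrg Y ≫ del Y from rfl]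
  monoidal

theorem coevaluation_tensor (X X' : C) :
    η_ (ᘁ(X ⊗ X') : C) (X ⊗ X') =
      (λ_ (𝟙_ C)).inv ≫ (η_ (ᘁX : C) X ⊗ₘ η_ (ᘁX' : C) X') ≫ tensorμ (ᘁX) X (ᘁX') X' := by
  change bng (X ⊗ X') ≫ dup (X ⊗ X') =
    (λ_ (𝟙_ C)).inv ≫ ((bng X ≫ dup X) ⊗ₘ (bng X' ≫ dup X')) ≫ tensorμ X X X' X'
  rw [bng_tensor, dup_tensor, ← tensorHom_comp_tensorHom]
  simp only [Category.assoc]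

theorem leftAdjointMate_tensorHom {X Y X' Y' : C} (R : X ⟶ Y) (S : X' ⟶ Y') :
    (ᘁ(R ⊗ₘ S)) = (ᘁR) ⊗ₘ (ᘁS) := by
  refine (eq_leftAdjointMate_of_coevaluation_comp ?_).symm
  rw [coevaluation_tensor, coevaluation_tensor]
  simp only [Category.assoc]
  have mates_natural :
      tensorμ (ᘁY) Y (ᘁY') Y' ≫ (leftAdjointMate R ⊗ₘ leftAdjointMate S) ▷ (Y ⊗ Y') =
        (leftAdjointMate R ▷ Y ⊗ₘ leftAdjointMate S ▷ Y') ≫ tensorμ (ᘁX) Y (ᘁX') Y' := by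
    simp only [← tensorHom_id]
    rw [← id_tensorHom_id, tensorμ_natural]
  have morphisms_natural :
      tensorμ (ᘁX) X (ᘁX') X' ≫ (ᘁ(X ⊗ X') : C) ◁ (R ⊗ₘ S) =
        ((ᘁX : C) ◁ R ⊗ₘ (ᘁX' : C) ◁ S) ≫ tensorμ (ᘁX) Y (ᘁX') Y' := by
    -- `ᘁ(X ⊗ X')` is `ᘁX ⊗ ᘁX'` only after unfolding, so this cannot be a plain `rw`
    have := tensorμ_natural (𝟙 (ᘁX : C)) R (𝟙 (ᘁX' : C)) S
    rw [id_tensorHom_id, id_tensorHom, id_tensorHom, id_tensorHom] at this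
    exact this.symm
  rw [mates_natural, morphisms_natural, tensorHom_comp_tensorHom_assoc,
    tensorHom_comp_tensorHom_assoc, coevaluation_comp_leftAdjointMate,
    coevaluation_comp_leftAdjointMate]

theorem whiskerLeft_mono {X Y Z : C} {f g : Y ⟶ Z} (h : f ≤ g) : X ◁ f ≤ X ◁ g := by
  rw [← id_tensorHom, ← id_tensorHom]
  exact tensor_mono le_rfl h

theorem whiskerRight_mono {X Y Z : C} {f g : X ⟶ Y} (h : f ≤ g) : f ▷ Z ≤ g ▷ Z := by
  rw [← tensorHom_id, ← tensorHom_id]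
  exact tensor_mono h le_rfl

theorem dagger_mono {X Y : C} {R S : X ⟶ Y} (h : R ≤ S) : dagger R ≤ dagger S :=
  comp_mono le_rfl <| comp_mono le_rfl <| comp_mono le_rfl <|
    comp_mono (whiskerLeft_mono (whiskerRight_mono h)) le_rfl

end CartesianBicatRel

open CartesianBicatRel in
/-- The dagger is a contravariant monoidal 2-functor: it preserves identities, reverses
composition, preserves tensor, and is monotone. -/
theorem dagger_functorial {C : Type u} [Category.{v} C] [MonoidalCategory C]
    [SymmetricCategory C] [∀ X Y : C, PartialOrder (X ⟶ Y)] [CartesianBicatRel C] :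
    (∀ X : C, dagger (𝟙 X) = 𝟙 X) ∧
    (∀ {X Y Z : C} (R : X ⟶ Y) (S : Y ⟶ Z), dagger (R ≫ S) = dagger S ≫ dagger R) ∧
    (∀ {X Y X' Y' : C} (R : X ⟶ Y) (S : X' ⟶ Y'), dagger (R ⊗ₘ S) = dagger R ⊗ₘ dagger S) ∧
    (∀ {X Y : C} (R S : X ⟶ Y), R ≤ S → dagger R ≤ dagger S) := by
  refine ⟨fun X => ?_, fun R S => ?_, fun R S => ?_, fun _ _ => dagger_mono⟩
  all_goals simp only [dagger_eq_leftAdjointMate]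
  · exact leftAdjointMate_id
  · exact comp_leftAdjointMate
  · exact leftAdjointMate_tensorHom R S
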